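/- arXiv:2511.02502 — 3 statements merged into one kernel-verified Lean document; each statement's English description precedes it below -/
import Mathlib

section
/- Monotonicity of the Fisher complexity: let P > Q be nonzero real numbers, γ ∈ (0, 2), α ≥ 1, and let f be a probability density function on (x_i, x_f) (with x_i > −∞), differentiable with f'(x) < 0 on (x_i, x_f). Let g = 𝔇_γ[f] be the one-parameter down transform of f, let G = 𝔈_α[g] be the differential-escort transform of g, and let h = 𝔘_γ[G] be the one-parameter up transform of G. Then, whenever all Fisher functionals involved are finite and nonzero, the Fisher complexity does not decrease: φ_{P,2−γ}[h]/φ_{Q,2−γ}[h] ≥ φ_{P,2−γ}[f]/φ_{Q,2−γ}[f]. -/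
/-!
One change of variables per transform shows that `𝔘_γ 𝔈_α 𝔇_γ` only rescales the exponent of
the Fisher functional: `∫ |f^{-γ} f'|^q f` equals `∫ g^{1-q}` for `g = 𝔇_γ[f]`,
`∫ g^{1-αp} = ∫ G^{1-p}` for `G = 𝔈_α[g]`, and `∫ G^{1-p}` equals `F_{p,2-γ}[h]` for
`h = 𝔘_γ[G]`; hence `F_{p,2-γ}[h] = F_{αp,2-γ}[f]`.

By Hölder's inequality `ψ(r) = log F_{r,2-γ}[f]` is convex in `r`, so its secant slopes increase
with both endpoints. For `1 ≤ α` and `Q < P` the chord over `{Q, αQ}` lies to the left of the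
chord over `{P, αP}`, so `(ψ(αQ) - ψ(Q)) / Q ≤ (ψ(αP) - ψ(P)) / P`; divided by `2 - γ > 0`, this
is the logarithm of the claimed inequality.
-/

open MeasureTheory Set Filter Topology

noncomputable section

/-- The open interval with extended-real endpoints, viewed as a set of reals. -/
def intIoo (a b : EReal) : Set ℝ := {x : ℝ | a < (x : EReal) ∧ (x : EReal) < b}

section Holder

variable {α : Type*} [MeasurableSpace α] {μ : Measure α}

theorem integrable_rpow_mul_rpow_and_integral_le {F₁ F₂ : α → ℝ}
    (hF₁ : Integrable F₁ μ) (hF₂ : Integrable F₂ μ) (h₁ : 0 ≤ᵐ[μ] F₁) (h₂ : 0 ≤ᵐ[μ] F₂)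
    {s t : ℝ} (hs : 0 ≤ s) (ht : 0 ≤ t) (hst : s + t = 1) :
    Integrable (fun x => F₁ x ^ s * F₂ x ^ t) μ ∧
      ∫ x, F₁ x ^ s * F₂ x ^ t ∂μ ≤ (∫ x, F₁ x ∂μ) ^ s * (∫ x, F₂ x ∂μ) ^ t := by
  have hmeas : AEStronglyMeasurable (fun x => F₁ x ^ s * F₂ x ^ t) μ :=
    ((hF₁.aemeasurable.pow_const s).mul (hF₂.aemeasurable.pow_const t)).aestronglyMeasurable
  have hnn : 0 ≤ᵐ[μ] fun x => F₁ x ^ s * F₂ x ^ t := by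
    filter_upwards [h₁, h₂] with x hx₁ hx₂
    exact mul_nonneg (Real.rpow_nonneg hx₁ s) (Real.rpow_nonneg hx₂ t)
  have hofReal : (fun x => ENNReal.ofReal (F₁ x ^ s * F₂ x ^ t)) =ᵐ[μ]
      fun x => ENNReal.ofReal (F₁ x) ^ s * ENNReal.ofReal (F₂ x) ^ t := by
    filter_upwards [h₁, h₂] with x hx₁ hx₂
    rw [ENNReal.ofReal_mul (Real.rpow_nonneg hx₁ s), ENNReal.ofReal_rpow_of_nonneg hx₁ hs,
      ENNReal.ofReal_rpow_of_nonneg hx₂ ht]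
  have hlint : ∫⁻ x, ENNReal.ofReal (F₁ x ^ s * F₂ x ^ t) ∂μ ≤
      ENNReal.ofReal (∫ x, F₁ x ∂μ) ^ s * ENNReal.ofReal (∫ x, F₂ x ∂μ) ^ t := by
    rw [lintegral_congr_ae hofReal, ofReal_integral_eq_lintegral_ofReal hF₁ h₁,
      ofReal_integral_eq_lintegral_ofReal hF₂ h₂]
    exact ENNReal.lintegral_mul_norm_pow_le hF₁.aemeasurable.ennreal_ofReal
      hF₂.aemeasurable.ennreal_ofReal hs ht hst
  have hfin : ENNReal.ofReal (∫ x, F₁ x ∂μ) ^ s * ENNReal.ofReal (∫ x, F₂ x ∂μ) ^ t ≠ ⊤ :=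
    ENNReal.mul_ne_top (ENNReal.rpow_ne_top_of_nonneg hs ENNReal.ofReal_ne_top)
      (ENNReal.rpow_ne_top_of_nonneg ht ENNReal.ofReal_ne_top)
  refine ⟨⟨hmeas, (hasFiniteIntegral_iff_ofReal hnn).2 (hlint.trans_lt hfin.lt_top)⟩, ?_⟩
  rw [integral_eq_lintegral_of_nonneg_ae hnn hmeas]
  refine (ENNReal.toReal_mono hfin hlint).trans_eq ?_
  rw [ENNReal.toReal_mul, ← ENNReal.toReal_rpow, ← ENNReal.toReal_rpow,
    ENNReal.toReal_ofReal (integral_nonneg_of_ae h₁),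
    ENNReal.toReal_ofReal (integral_nonneg_of_ae h₂)]

theorem integral_pos_of_ae_pos {F : α → ℝ} (hμ : μ ≠ 0) (hF : Integrable F μ)
    (hpos : ∀ᵐ x ∂μ, 0 < F x) : 0 < ∫ x, F x ∂μ := by
  rw [integral_pos_iff_support_of_nonneg_ae (hpos.mono fun _ hx => hx.le) hF]
  have hsupp : Function.support F =ᵐ[μ] (univ : Set α) :=
    ae_eq_univ.2 <| measure_mono_null
      (fun x hx (hFx : 0 < F x) => hFx.ne' (Function.notMem_support.1 hx)) (ae_iff.1 hpos)
  rw [measure_congr hsupp]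
  exact Measure.measure_univ_pos.2 hμ

variable {X w : α → ℝ}

theorem integrable_rpow_mul_and_integral_le (hX : ∀ᵐ x ∂μ, 0 < X x) (hw : ∀ᵐ x ∂μ, 0 < w x)
    {a b s t : ℝ} (ha : Integrable (fun x => X x ^ a * w x) μ)
    (hb : Integrable (fun x => X x ^ b * w x) μ) (hs : 0 ≤ s) (ht : 0 ≤ t) (hst : s + t = 1) :
    Integrable (fun x => X x ^ (s * a + t * b) * w x) μ ∧
      ∫ x, X x ^ (s * a + t * b) * w x ∂μ ≤
        (∫ x, X x ^ a * w x ∂μ) ^ s * (∫ x, X x ^ b * w x ∂μ) ^ t := by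
  have hnn (r : ℝ) : 0 ≤ᵐ[μ] fun x => X x ^ r * w x := by
    filter_upwards [hX, hw] with x hXx hwx using by positivity
  have hmix : (fun x => X x ^ (s * a + t * b) * w x) =ᵐ[μ]
      fun x => (X x ^ a * w x) ^ s * (X x ^ b * w x) ^ t := by
    filter_upwards [hX, hw] with x hXx hwx
    rw [Real.mul_rpow (by positivity) hwx.le, Real.mul_rpow (by positivity) hwx.le,
      ← Real.rpow_mul hXx.le, ← Real.rpow_mul hXx.le, mul_mul_mul_comm, ← Real.rpow_add hXx,
      ← Real.rpow_add hwx, hst, Real.rpow_one, mul_comm a, mul_comm b]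
  obtain ⟨hint, hle⟩ := integrable_rpow_mul_rpow_and_integral_le ha hb (hnn a) (hnn b) hs ht hst
  exact ⟨hint.congr hmix.symm, (integral_congr_ae hmix).trans_le hle⟩

theorem convexOn_log_integral_rpow_mul (hμ : μ ≠ 0) (hX : ∀ᵐ x ∂μ, 0 < X x)
    (hw : ∀ᵐ x ∂μ, 0 < w x) :
    ConvexOn ℝ {r : ℝ | Integrable (fun x => X x ^ r * w x) μ}
      (fun r => Real.log (∫ x, X x ^ r * w x ∂μ)) := by
  refine ⟨fun a ha b hb s t hs ht hst =>
    (integrable_rpow_mul_and_integral_le hX hw ha hb hs ht hst).1,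
    fun a ha b hb s t hs ht hst => ?_⟩
  obtain ⟨hint, hle⟩ := integrable_rpow_mul_and_integral_le hX hw ha hb hs ht hst
  have hpos {r : ℝ} (hr : Integrable (fun x => X x ^ r * w x) μ) :
      0 < ∫ x, X x ^ r * w x ∂μ :=
    integral_pos_of_ae_pos hμ hr (by filter_upwards [hX, hw] with x hXx hwx using by positivity)
  calc Real.log (∫ x, X x ^ (s • a + t • b) * w x ∂μ)
      ≤ Real.log ((∫ x, X x ^ a * w x ∂μ) ^ s * (∫ x, X x ^ b * w x ∂μ) ^ t) :=
        Real.log_le_log (hpos hint) hle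
    _ = s • Real.log (∫ x, X x ^ a * w x ∂μ) + t • Real.log (∫ x, X x ^ b * w x ∂μ) := by
        rw [Real.log_mul (Real.rpow_pos_of_pos (hpos ha) s).ne'
          (Real.rpow_pos_of_pos (hpos hb) t).ne', Real.log_rpow (hpos ha),
          Real.log_rpow (hpos hb), smul_eq_mul, smul_eq_mul]

end Holder

theorem ConvexOn.slope_le_slope {s : Set ℝ} {ψ : ℝ → ℝ} (hψ : ConvexOn ℝ s ψ) {a b c d : ℝ}
    (ha : a ∈ s) (hb : b ∈ s) (hc : c ∈ s) (hd : d ∈ s) (hab : a < b) (hcd : c < d)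
    (hac : a ≤ c) (hbd : b ≤ d) : slope ψ a b ≤ slope ψ c d :=
  calc slope ψ a b ≤ slope ψ a d :=
        hψ.slope_mono ha ⟨hb, hab.ne'⟩ ⟨hd, (hab.trans_le hbd).ne'⟩ hbd
    _ = slope ψ d a := slope_comm ψ a d
    _ ≤ slope ψ d c := hψ.slope_mono hd ⟨ha, (hab.trans_le hbd).ne⟩ ⟨hc, hcd.ne⟩ hac
    _ = slope ψ c d := slope_comm ψ d c

theorem slope_min_max (ψ : ℝ → ℝ) (a b : ℝ) : slope ψ (min a b) (max a b) = slope ψ a b := by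
  rcases le_total a b with h | h
  · rw [min_eq_left h, max_eq_right h]
  · rw [min_eq_right h, max_eq_left h, slope_comm]

theorem ConvexOn.div_sub_le_div_sub_of_mul {s : Set ℝ} {ψ : ℝ → ℝ} (hψ : ConvexOn ℝ s ψ)
    {P Q α : ℝ} (hQP : Q < P) (hP : P ≠ 0) (hQ : Q ≠ 0) (hα : 1 ≤ α)
    (hPs : P ∈ s) (hQs : Q ∈ s) (hαPs : α * P ∈ s) (hαQs : α * Q ∈ s) :
    (ψ (α * Q) - ψ Q) / Q ≤ (ψ (α * P) - ψ P) / P := by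
  rcases hα.eq_or_lt with rfl | hα
  · simp
  -- both quotients are `α - 1` times a secant slope of `ψ`
  have hrescale : ∀ R, R ≠ 0 → (ψ (α * R) - ψ R) / R = (α - 1) * slope ψ R (α * R) := by
    intro R hR
    rw [slope_def_field, show α * R - R = (α - 1) * R by ring]
    field_simp [(sub_pos.2 hα).ne']
  have hmem : ∀ R, R ∈ s → α * R ∈ s → min R (α * R) ∈ s ∧ max R (α * R) ∈ s := fun R h h' =>
    ⟨by rcases min_choice R (α * R) with e | e <;> rwa [e],
      by rcases max_choice R (α * R) with e | e <;> rwa [e]⟩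
  have hlt : ∀ R, R ≠ 0 → min R (α * R) < max R (α * R) := fun R hR =>
    min_lt_max.2 fun h => mul_ne_zero (sub_pos.2 hα).ne' hR (by linarith)
  have hαQP : α * Q ≤ α * P := mul_le_mul_of_nonneg_left hQP.le (by linarith)
  rw [hrescale P hP, hrescale Q hQ, ← slope_min_max, ← slope_min_max ψ P]
  exact mul_le_mul_of_nonneg_left
    (hψ.slope_le_slope (hmem Q hQs hαQs).1 (hmem Q hQs hαQs).2 (hmem P hPs hαPs).1
      (hmem P hPs hαPs).2 (hlt Q hQ) (hlt P hP) (min_le_min hQP.le hαQP) (max_le_max hQP.le hαQP))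
    (by linarith)

theorem rpow_div_rpow_le_of_log_sub_div_le {a b c d P Q k : ℝ} (ha : 0 < a) (hb : 0 < b)
    (hc : 0 < c) (hd : 0 < d) (hk : 0 < k)
    (h : (Real.log c - Real.log a) / Q ≤ (Real.log d - Real.log b) / P) :
    b ^ (1 / (P * k)) / a ^ (1 / (Q * k)) ≤ d ^ (1 / (P * k)) / c ^ (1 / (Q * k)) := by
  rw [← Real.log_le_log_iff (by positivity) (by positivity),
    Real.log_div (by positivity) (by positivity), Real.log_div (by positivity) (by positivity),
    Real.log_rpow ha, Real.log_rpow hb, Real.log_rpow hc, Real.log_rpow hd]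
  have := div_le_div_of_nonneg_right h hk.le
  have e : ∀ x y R : ℝ, (x - y) / R / k = 1 / (R * k) * x - 1 / (R * k) * y := fun x y R => by ring
  rw [e, e] at this
  linarith

theorem integral_image_eq_and_integrableOn_image_iff {S : Set ℝ} {φ φ' F G : ℝ → ℝ}
    (hS : MeasurableSet S) (hφ : ∀ x ∈ S, HasDerivWithinAt φ (φ' x) S x) (hinj : InjOn φ S)
    (hFG : ∀ᵐ x ∂volume.restrict S, |φ' x| * F (φ x) = G x) :
    (∫ v in φ '' S, F v = ∫ x in S, G x) ∧ (IntegrableOn F (φ '' S) ↔ IntegrableOn G S) :=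
  ⟨(integral_image_eq_integral_abs_deriv_smul hS hφ hinj F).trans (integral_congr_ae hFG),
    (integrableOn_image_iff_integrableOn_abs_deriv_smul hS hφ hinj F).trans
      (integrableOn_congr_fun_ae hFG)⟩

theorem hasDerivAt_abs_mul_rpow {c q w : ℝ} (h : c * w ≠ 0) :
    HasDerivAt (fun t => |c * t| ^ q) (q * |c * w| ^ (q - 1) * (SignType.sign (c * w) * c)) w := by
  have := (Real.hasDerivAt_rpow_const (p := q) (Or.inl (abs_ne_zero.2 h))).comp w
    ((hasDerivAt_abs h).comp w ((hasDerivAt_id w).const_mul c))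
  simpa only [Function.comp_def, id, mul_one, mul_assoc] using this

theorem pos_of_nonneg_of_hasDerivAt_ne_zero {f : ℝ → ℝ} {f' x : ℝ} (hf : ∀ y, 0 ≤ f y)
    (hderiv : HasDerivAt f f' x) (hf' : f' ≠ 0) : 0 < f x :=
  (hf x).lt_of_ne fun h0 => hf' <|
    (IsLocalMin.hasDerivAt_eq_zero (Eventually.of_forall fun y => h0 ▸ hf y) hderiv)

theorem integral_downTransform_eq {I : Set ℝ} (hI : MeasurableSet I) {γ : ℝ} (q : ℝ)
    {f f' s g : ℝ → ℝ} (hf : ∀ x ∈ I, 0 < f x) (hf' : ∀ x ∈ I, f' x ≠ 0)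
    (hs : ∀ x ∈ I, HasDerivAt s (f x ^ (1 - γ) * |f' x|) x) (hs_inj : InjOn s I)
    (hg : ∀ x ∈ I, g (s x) = f x ^ γ / |f' x|) :
    (∫ z in s '' I, g z ^ (1 - q) = ∫ x in I, |f x ^ ((2 - γ) - 2) * f' x| ^ q * f x) ∧
      (IntegrableOn (fun z => g z ^ (1 - q)) (s '' I) ↔
        IntegrableOn (fun x => |f x ^ ((2 - γ) - 2) * f' x| ^ q * f x) I) := by
  refine integral_image_eq_and_integrableOn_image_iff hI
    (fun x hx => (hs x hx).hasDerivWithinAt) hs_inj ?_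
  filter_upwards [ae_restrict_mem hI] with x hx
  obtain ⟨a, ha⟩ : ∃ a, f x = Real.exp a := ⟨_, (Real.exp_log (hf x hx)).symm⟩
  obtain ⟨b, hb⟩ : ∃ b, |f' x| = Real.exp b := ⟨_, (Real.exp_log (abs_pos.2 (hf' x hx))).symm⟩
  rw [hg x hx, abs_mul, abs_mul, abs_abs, ha, hb]
  simp only [← Real.exp_mul, ← Real.exp_sub, Real.abs_exp, ← Real.exp_add]
  congr 1
  ring

theorem integral_escortTransform_eq {T : Set ℝ} (hT : MeasurableSet T) {α : ℝ} (p : ℝ)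
    {g y G : ℝ → ℝ} (hg : ∀ z ∈ T, 0 < g z)
    (hy : ∀ z ∈ T, HasDerivAt y (g z ^ (1 - α)) z) (hy_inj : InjOn y T)
    (hG : ∀ z ∈ T, G (y z) = g z ^ α) :
    (∫ w in y '' T, G w ^ (1 - p) = ∫ z in T, g z ^ (1 - α * p)) ∧
      (IntegrableOn (fun w => G w ^ (1 - p)) (y '' T) ↔
        IntegrableOn (fun z => g z ^ (1 - α * p)) T) := by
  refine integral_image_eq_and_integrableOn_image_iff hT
    (fun z hz => (hy z hz).hasDerivWithinAt) hy_inj ?_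
  filter_upwards [ae_restrict_mem hT] with z hz
  have hgz := hg z hz
  rw [hG z hz, abs_of_pos (Real.rpow_pos_of_pos hgz _), ← Real.rpow_mul hgz.le,
    ← Real.rpow_add hgz]
  ring_nf

theorem abs_deriv_mul_fisherIntegrand_upTransform {T : Set ℝ} {γ : ℝ} (hγ : γ ≠ 2) (p : ℝ)
    {G u h h' : ℝ → ℝ}
    (hu : ∀ w ∈ T, HasDerivAt u (-(|(γ - 2) * w| ^ ((1 : ℝ) / (γ - 2)) * G w)) w)
    (hh : ∀ w ∈ T, h (u w) = |(γ - 2) * w| ^ ((1 : ℝ) / (2 - γ)))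
    (hh' : ∀ v ∈ u '' T, HasDerivAt h (h' v) v) {w : ℝ} (hw : w ∈ interior T) (hw0 : w ≠ 0)
    (hGw : 0 < G w) :
    |-(|(γ - 2) * w| ^ ((1 : ℝ) / (γ - 2)) * G w)| *
      (|h (u w) ^ ((2 - γ) - 2) * h' (u w)| ^ p * h (u w)) = G w ^ (1 - p) := by
  have hcw : (γ - 2) * w ≠ 0 := mul_ne_zero (sub_ne_zero.2 hγ) hw0
  have hk : 2 - γ ≠ 0 := sub_ne_zero.2 (Ne.symm hγ)
  set q : ℝ := 1 / (2 - γ) with hq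
  set m := |(γ - 2) * w| with hm
  have hm0 : 0 < m := abs_pos.2 hcw
  -- `h ∘ u` agrees near `w` with `t ↦ |(γ - 2) t| ^ q`, whose derivative is explicit
  have hchain := ((hh' (u w) (mem_image_of_mem u (interior_subset hw))).comp w
    (hu w (interior_subset hw))).unique
    ((hasDerivAt_abs_mul_rpow (q := q) hcw).congr_of_eventuallyEq
      (by filter_upwards [isOpen_interior.mem_nhds hw] with t ht using hh t (interior_subset ht)))
  have hρ_abs : |q * m ^ (q - 1) * (SignType.sign ((γ - 2) * w) * (γ - 2))| = m ^ (q - 1) := by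
    have hsign : |(SignType.sign ((γ - 2) * w) : ℝ)| = 1 := by
      rcases lt_or_gt_of_ne hcw with hneg | hpos <;> simp [sign_neg, sign_pos, *]
    rw [abs_mul, abs_mul, abs_mul, hsign, abs_of_pos (Real.rpow_pos_of_pos hm0 _), hq, abs_div,
      abs_one, abs_sub_comm 2 γ]
    field_simp [abs_ne_zero.2 (sub_ne_zero.2 hγ)]
  have hu_abs : |-(m ^ ((1 : ℝ) / (γ - 2)) * G w)| = m ^ (-q) * G w := by
    rw [abs_neg, abs_of_pos (by positivity), hq, ← div_neg, neg_sub]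
  have hh'_abs : |h' (u w)| = m ^ (q - 1) / (m ^ (-q) * G w) := by
    rw [eq_div_iff (by positivity), ← hu_abs, ← abs_mul, hchain, hρ_abs]
  rw [hu_abs, hh w (interior_subset hw), ← hm, abs_mul, hh'_abs, abs_of_pos (by positivity)]
  obtain ⟨a, ha⟩ : ∃ a, m = Real.exp a := ⟨_, (Real.exp_log hm0).symm⟩
  obtain ⟨b, hb⟩ : ∃ b, G w = Real.exp b := ⟨_, (Real.exp_log hGw).symm⟩
  rw [ha, hb]
  simp only [← Real.exp_mul, ← Real.exp_sub, ← Real.exp_add]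
  congr 1
  rw [hq]
  field_simp
  ring

theorem integral_upTransform_eq {T : Set ℝ} (hT : OrdConnected T) {γ : ℝ} (hγ : γ ≠ 2) (p : ℝ)
    {G u h h' : ℝ → ℝ} (hG : ∀ w ∈ T, 0 < G w)
    (hu : ∀ w ∈ T, HasDerivAt u (-(|(γ - 2) * w| ^ ((1 : ℝ) / (γ - 2)) * G w)) w)
    (hu_inj : InjOn u T)
    (hh : ∀ w ∈ T, h (u w) = |(γ - 2) * w| ^ ((1 : ℝ) / (2 - γ)))
    (hh' : ∀ v ∈ u '' T, HasDerivAt h (h' v) v) :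
    (∫ v in u '' T, |h v ^ ((2 - γ) - 2) * h' v| ^ p * h v = ∫ w in T, G w ^ (1 - p)) ∧
      (IntegrableOn (fun v => |h v ^ ((2 - γ) - 2) * h' v| ^ p * h v) (u '' T) ↔
        IntegrableOn (fun w => G w ^ (1 - p)) T) := by
  have hTm := hT.measurableSet
  refine integral_image_eq_and_integrableOn_image_iff hTm
    (fun w hw => (hu w hw).hasDerivWithinAt) hu_inj ?_
  have hfrontier : volume (frontier T) = 0 :=
    (convex_iff_ordConnected.2 hT).addHaar_frontier volume
  filter_upwards [ae_restrict_of_ae (measure_eq_zero_iff_ae_notMem.1 hfrontier),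
    ae_restrict_of_ae (measure_eq_zero_iff_ae_notMem.1 (measure_singleton (0 : ℝ))),
    ae_restrict_mem hTm] with w hw_frontier hw0 hw
  have hw_int : w ∈ interior T := by_contra fun hc => hw_frontier ⟨subset_closure hw, hc⟩
  exact abs_deriv_mul_fisherIntegrand_upTransform hγ p hu hh hh' hw_int hw0 (hG w hw)

theorem integral_upEscortDownTransform_eq {I : Set ℝ} (hI : OrdConnected I) {γ α : ℝ}
    (hγ : γ ≠ 2) (p : ℝ) {f f' s g y G u h h' : ℝ → ℝ}
    (hf : ∀ x ∈ I, 0 < f x) (hf' : ∀ x ∈ I, f' x ≠ 0)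
    (hs : ∀ x ∈ I, HasDerivAt s (f x ^ (1 - γ) * |f' x|) x) (hs_inj : InjOn s I)
    (hg : ∀ x ∈ I, g (s x) = f x ^ γ / |f' x|)
    (hy : ∀ z ∈ s '' I, HasDerivAt y (g z ^ (1 - α)) z)
    (hG : ∀ z ∈ s '' I, G (y z) = g z ^ α)
    (hu : ∀ w ∈ y '' (s '' I), HasDerivAt u (-(|(γ - 2) * w| ^ ((1 : ℝ) / (γ - 2)) * G w)) w)
    (hu_inj : InjOn u (y '' (s '' I)))
    (hh : ∀ w ∈ y '' (s '' I), h (u w) = |(γ - 2) * w| ^ ((1 : ℝ) / (2 - γ)))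
    (hh' : ∀ v ∈ u '' (y '' (s '' I)), HasDerivAt h (h' v) v) :
    (∫ v in u '' (y '' (s '' I)), |h v ^ ((2 - γ) - 2) * h' v| ^ p * h v =
        ∫ x in I, |f x ^ ((2 - γ) - 2) * f' x| ^ (α * p) * f x) ∧
      (IntegrableOn (fun v => |h v ^ ((2 - γ) - 2) * h' v| ^ p * h v) (u '' (y '' (s '' I))) ↔
        IntegrableOn (fun x => |f x ^ ((2 - γ) - 2) * f' x| ^ (α * p) * f x) I) := by
  have hg_pos : ∀ z ∈ s '' I, 0 < g z := by
    rintro _ ⟨x, hx, rfl⟩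
    rw [hg x hx]
    exact div_pos (Real.rpow_pos_of_pos (hf x hx) _) (abs_pos.2 (hf' x hx))
  have hG_pos : ∀ w ∈ y '' (s '' I), 0 < G w := by
    rintro _ ⟨z, hz, rfl⟩
    rw [hG z hz]
    exact Real.rpow_pos_of_pos (hg_pos z hz) _
  have hsI : OrdConnected (s '' I) := isPreconnected_iff_ordConnected.1 <|
    hI.isPreconnected.image s fun x hx => (hs x hx).continuousAt.continuousWithinAt
  have hy_cont : ContinuousOn y (s '' I) := fun z hz => (hy z hz).continuousAt.continuousWithinAt
  have hy_mono : StrictMonoOn y (s '' I) :=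
    strictMonoOn_of_deriv_pos (convex_iff_ordConnected.2 hsI) hy_cont fun z hz => by
      rw [(hy z (interior_subset hz)).deriv]
      exact Real.rpow_pos_of_pos (hg_pos z (interior_subset hz)) _
  have hysI : OrdConnected (y '' (s '' I)) :=
    isPreconnected_iff_ordConnected.1 (hsI.isPreconnected.image y hy_cont)
  obtain ⟨hup, hup_int⟩ := integral_upTransform_eq hysI hγ p hG_pos hu hu_inj hh hh'
  obtain ⟨hescort, hescort_int⟩ :=
    integral_escortTransform_eq hsI.measurableSet p hg_pos hy hy_mono.injOn hG
  obtain ⟨hdown, hdown_int⟩ :=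
    integral_downTransform_eq hI.measurableSet (α * p) hf hf' hs hs_inj hg
  exact ⟨hup.trans (hescort.trans hdown), hup_int.trans (hescort_int.trans hdown_int)⟩

theorem fisher_complexity_monotonicity_general
    (P Q γ α : ℝ)
    (hPQ : Q < P) (hP : P ≠ 0) (hQ : Q ≠ 0)
    (hγ2 : γ < 2) (hα : 1 ≤ α)
    (xi : ℝ) (xf : EReal)
    (f f' s g y G u h h' : ℝ → ℝ)
    (hf_nonneg : ∀ x, 0 ≤ f x)
    (hf' : ∀ x ∈ intIoo (xi : EReal) xf, HasDerivAt f (f' x) x)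
    (hf'_neg : ∀ x ∈ intIoo (xi : EReal) xf, f' x < 0)
    -- g = 𝔇_γ[f]
    (hs : ∀ x ∈ intIoo (xi : EReal) xf, HasDerivAt s (f x ^ (1 - γ) * |f' x|) x)
    (hs_mono : StrictMonoOn s (intIoo (xi : EReal) xf))
    (hgdef : ∀ x ∈ intIoo (xi : EReal) xf, g (s x) = f x ^ γ / |f' x|)
    -- G = 𝔈_α[g]
    (hy : ∀ z ∈ s '' intIoo (xi : EReal) xf, HasDerivAt y (g z ^ (1 - α)) z)
    (hGdef : ∀ z ∈ s '' intIoo (xi : EReal) xf, G (y z) = g z ^ α)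
    -- h = 𝔘_γ[G]
    (hu : ∀ w ∈ y '' (s '' intIoo (xi : EReal) xf),
      HasDerivAt u (-(|(γ - 2) * w| ^ ((1 : ℝ) / (γ - 2)) * G w)) w)
    (hu_anti : StrictAntiOn u (y '' (s '' intIoo (xi : EReal) xf)))
    (hhdef : ∀ w ∈ y '' (s '' intIoo (xi : EReal) xf),
      h (u w) = |(γ - 2) * w| ^ ((1 : ℝ) / (2 - γ)))
    (hh' : ∀ v ∈ u '' (y '' (s '' intIoo (xi : EReal) xf)), HasDerivAt h (h' v) v)
    -- finiteness and nondegeneracy of the four Fisher functionals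
    (hfin1 : IntegrableOn (fun x => |f x ^ ((2 - γ) - 2) * f' x| ^ P * f x)
      (intIoo (xi : EReal) xf))
    (hfin2 : IntegrableOn (fun x => |f x ^ ((2 - γ) - 2) * f' x| ^ Q * f x)
      (intIoo (xi : EReal) xf))
    (hfin3 : IntegrableOn (fun v => |h v ^ ((2 - γ) - 2) * h' v| ^ P * h v)
      (u '' (y '' (s '' intIoo (xi : EReal) xf))))
    (hfin4 : IntegrableOn (fun v => |h v ^ ((2 - γ) - 2) * h' v| ^ Q * h v)
      (u '' (y '' (s '' intIoo (xi : EReal) xf))))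
    (hne1 : (∫ x in intIoo (xi : EReal) xf, |f x ^ ((2 - γ) - 2) * f' x| ^ P * f x) ≠ 0)
    (hne2 : (∫ x in intIoo (xi : EReal) xf, |f x ^ ((2 - γ) - 2) * f' x| ^ Q * f x) ≠ 0)
    (hne3 : (∫ v in u '' (y '' (s '' intIoo (xi : EReal) xf)),
        |h v ^ ((2 - γ) - 2) * h' v| ^ P * h v) ≠ 0)
    (hne4 : (∫ v in u '' (y '' (s '' intIoo (xi : EReal) xf)),
        |h v ^ ((2 - γ) - 2) * h' v| ^ Q * h v) ≠ 0) :
    (∫ v in u '' (y '' (s '' intIoo (xi : EReal) xf)),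
        |h v ^ ((2 - γ) - 2) * h' v| ^ P * h v) ^ ((1 : ℝ) / (P * (2 - γ)))
      / (∫ v in u '' (y '' (s '' intIoo (xi : EReal) xf)),
          |h v ^ ((2 - γ) - 2) * h' v| ^ Q * h v) ^ ((1 : ℝ) / (Q * (2 - γ)))
    ≥ (∫ x in intIoo (xi : EReal) xf,
          |f x ^ ((2 - γ) - 2) * f' x| ^ P * f x) ^ ((1 : ℝ) / (P * (2 - γ)))
      / (∫ x in intIoo (xi : EReal) xf,
          |f x ^ ((2 - γ) - 2) * f' x| ^ Q * f x) ^ ((1 : ℝ) / (Q * (2 - γ))) := by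
  set I := intIoo (xi : EReal) xf
  have hI : OrdConnected I := ordConnected_Ioo.preimage_mono fun _ _ => EReal.coe_le_coe_iff.2
  have hf_pos : ∀ x ∈ I, 0 < f x := fun x hx =>
    pos_of_nonneg_of_hasDerivAt_ne_zero hf_nonneg (hf' x hx) (hf'_neg x hx).ne
  have htransfer (p : ℝ) := integral_upEscortDownTransform_eq hI hγ2.ne p hf_pos
    (fun x hx => (hf'_neg x hx).ne) hs hs_mono.injOn hgdef hy hGdef hu hu_anti.injOn hhdef hh'
  obtain ⟨hP_eq, hP_int⟩ := htransfer P
  obtain ⟨hQ_eq, hQ_int⟩ := htransfer Q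
  have hμ : volume.restrict I ≠ 0 := fun h0 => hne1 (by simp [h0])
  have hconv := convexOn_log_integral_rpow_mul hμ
    (X := fun x => |f x ^ ((2 - γ) - 2) * f' x|) (w := f)
    (by filter_upwards [ae_restrict_mem hI.measurableSet] with x hx
        exact abs_pos.2 (mul_ne_zero (Real.rpow_pos_of_pos (hf_pos x hx) _).ne' (hf'_neg x hx).ne))
    (by filter_upwards [ae_restrict_mem hI.measurableSet] with x hx using hf_pos x hx)
  have hF_pos (r : ℝ) (hr : (∫ x in I, |f x ^ ((2 - γ) - 2) * f' x| ^ r * f x) ≠ 0) :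
      0 < ∫ x in I, |f x ^ ((2 - γ) - 2) * f' x| ^ r * f x :=
    (integral_nonneg fun x =>
      mul_nonneg (Real.rpow_nonneg (abs_nonneg _) _) (hf_nonneg x)).lt_of_ne' hr
  rw [hP_eq] at hne3 ⊢
  rw [hQ_eq] at hne4 ⊢
  exact rpow_div_rpow_le_of_log_sub_div_le (hF_pos Q hne2) (hF_pos P hne1) (hF_pos _ hne4)
    (hF_pos _ hne3) (by linarith)
    (hconv.div_sub_le_div_sub_of_mul hPQ hP hQ hα hfin1 hfin2 (hP_int.1 hfin3) (hQ_int.1 hfin4))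

/-- monotonicity of the Fisher complexity under the conjugated
transform `𝔘_γ𝔈_α𝔇_γ`:
`φ_{P,2-γ}[h]/φ_{Q,2-γ}[h] ≥ φ_{P,2-γ}[f]/φ_{Q,2-γ}[f]`. -/
theorem fisher_complexity_monotonicity
    (P Q γ α : ℝ)
    (hPQ : Q < P) (hP : P ≠ 0) (hQ : Q ≠ 0)
    (hγ0 : 0 < γ) (hγ2 : γ < 2) (hα : 1 ≤ α)
    (xi : ℝ) (xf : EReal) (hif : (xi : EReal) < xf)
    (f f' s g y G u h h' : ℝ → ℝ)
    (hf_meas : Measurable f)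
    (hf_nonneg : ∀ x, 0 ≤ f x)
    (hf_supp : ∀ x ∉ intIoo (xi : EReal) xf, f x = 0)
    (hf_int : (∫ x, f x) = 1)
    (hf' : ∀ x ∈ intIoo (xi : EReal) xf, HasDerivAt f (f' x) x)
    (hf'_neg : ∀ x ∈ intIoo (xi : EReal) xf, f' x < 0)
    -- g = 𝔇_γ[f]
    (hs : ∀ x ∈ intIoo (xi : EReal) xf, HasDerivAt s (f x ^ (1 - γ) * |f' x|) x)
    (hs_mono : StrictMonoOn s (intIoo (xi : EReal) xf))
    (hgdef : ∀ x ∈ intIoo (xi : EReal) xf, g (s x) = f x ^ γ / |f' x|)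
    (hg0 : ∀ z ∉ s '' intIoo (xi : EReal) xf, g z = 0)
    -- G = 𝔈_α[g]
    (hy : ∀ z ∈ s '' intIoo (xi : EReal) xf, HasDerivAt y (g z ^ (1 - α)) z)
    (hGdef : ∀ z ∈ s '' intIoo (xi : EReal) xf, G (y z) = g z ^ α)
    (hG0 : ∀ w ∉ y '' (s '' intIoo (xi : EReal) xf), G w = 0)
    -- h = 𝔘_γ[G]
    (hu : ∀ w ∈ y '' (s '' intIoo (xi : EReal) xf),
      HasDerivAt u (-(|(γ - 2) * w| ^ ((1 : ℝ) / (γ - 2)) * G w)) w)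
    (hu_anti : StrictAntiOn u (y '' (s '' intIoo (xi : EReal) xf)))
    (hhdef : ∀ w ∈ y '' (s '' intIoo (xi : EReal) xf),
      h (u w) = |(γ - 2) * w| ^ ((1 : ℝ) / (2 - γ)))
    (hh0 : ∀ v ∉ u '' (y '' (s '' intIoo (xi : EReal) xf)), h v = 0)
    (hh' : ∀ v ∈ u '' (y '' (s '' intIoo (xi : EReal) xf)), HasDerivAt h (h' v) v)
    -- finiteness and nondegeneracy of the four Fisher functionals
    (hfin1 : IntegrableOn (fun x => |f x ^ ((2 - γ) - 2) * f' x| ^ P * f x)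
      (intIoo (xi : EReal) xf))
    (hfin2 : IntegrableOn (fun x => |f x ^ ((2 - γ) - 2) * f' x| ^ Q * f x)
      (intIoo (xi : EReal) xf))
    (hfin3 : IntegrableOn (fun v => |h v ^ ((2 - γ) - 2) * h' v| ^ P * h v)
      (u '' (y '' (s '' intIoo (xi : EReal) xf))))
    (hfin4 : IntegrableOn (fun v => |h v ^ ((2 - γ) - 2) * h' v| ^ Q * h v)
      (u '' (y '' (s '' intIoo (xi : EReal) xf))))
    (hne1 : (∫ x in intIoo (xi : EReal) xf, |f x ^ ((2 - γ) - 2) * f' x| ^ P * f x) ≠ 0)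
    (hne2 : (∫ x in intIoo (xi : EReal) xf, |f x ^ ((2 - γ) - 2) * f' x| ^ Q * f x) ≠ 0)
    (hne3 : (∫ v in u '' (y '' (s '' intIoo (xi : EReal) xf)),
        |h v ^ ((2 - γ) - 2) * h' v| ^ P * h v) ≠ 0)
    (hne4 : (∫ v in u '' (y '' (s '' intIoo (xi : EReal) xf)),
        |h v ^ ((2 - γ) - 2) * h' v| ^ Q * h v) ≠ 0) :
    (∫ v in u '' (y '' (s '' intIoo (xi : EReal) xf)),
        |h v ^ ((2 - γ) - 2) * h' v| ^ P * h v) ^ ((1 : ℝ) / (P * (2 - γ)))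
      / (∫ v in u '' (y '' (s '' intIoo (xi : EReal) xf)),
          |h v ^ ((2 - γ) - 2) * h' v| ^ Q * h v) ^ ((1 : ℝ) / (Q * (2 - γ)))
    ≥ (∫ x in intIoo (xi : EReal) xf,
          |f x ^ ((2 - γ) - 2) * f' x| ^ P * f x) ^ ((1 : ℝ) / (P * (2 - γ)))
      / (∫ x in intIoo (xi : EReal) xf,
          |f x ^ ((2 - γ) - 2) * f' x| ^ Q * f x) ^ ((1 : ℝ) / (Q * (2 - γ))) :=
  fisher_complexity_monotonicity_general P Q γ α hPQ hP hQ hγ2 hα xi xf f f' s g y G u h h'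
    hf_nonneg hf' hf'_neg hs hs_mono hgdef hy hGdef hu hu_anti hhdef hh' hfin1 hfin2 hfin3 hfin4
    hne1 hne2 hne3 hne4
end
end

section
/- Composition of down and differential-escort transforms: let α > 0, γ ∈ ℝ, and let f be a probability density function on (x_i, x_f), differentiable with f'(x) < 0 on (x_i, x_f). Let g = 𝔈_α[f] be its differential-escort transform, realized by a differentiable map y with y'(x) = f(x)^{1−α} and g(y(x)) = f(x)^{α}. Then g is a differentiable strictly decreasing probability density, and for every x ∈ (x_i, x_f): g(y(x))^{γ} / |g'(y(x))| = (1/α) · f(x)^{2+α(γ−2)} / |f'(x)| and g(y(x))^{1−γ} |g'(y(x))| · y'(x) = α · f(x)^{1−(2+α(γ−2))} |f'(x)|; that is, the γ-down transform of 𝔈_α[f] coincides, up to the dilation factor α, with the (2+α(γ−2))-down transform of f. -/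
open MeasureTheory Set Filter Topology

noncomputable section

lemma isOpen_intIoo (a b : EReal) : IsOpen (intIoo a b) := by
  have h : intIoo a b = ((↑) : ℝ → EReal) ⁻¹' (Set.Ioo a b) := rfl
  rw [h]
  exact (isOpen_Ioo).preimage continuous_coe_real_ereal

lemma ordConnected_intIoo (a b : EReal) : (intIoo a b).OrdConnected := by
  constructor
  intro x hx z hz c hc
  exact ⟨lt_of_lt_of_le hx.1 (EReal.coe_le_coe_iff.2 hc.1),
    lt_of_le_of_lt (EReal.coe_le_coe_iff.2 hc.2) hz.2⟩

/-- composition of the down and differential-escort transforms: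
for `g = 𝔈_α[f]`, `g` is a differentiable strictly decreasing pdf and
`𝔇_γ[𝔈_α[f]] = (1/α)·𝔇_{2+α(γ-2)}[f]` pointwise (data and rate identities). -/
theorem down_transform_of_escort_transform
    (α γ : ℝ) (hα : 0 < α)
    (xi xf : EReal) (hif : xi < xf)
    (f f' y g : ℝ → ℝ)
    (hf_meas : Measurable f)
    (hf_nonneg : ∀ x, 0 ≤ f x)
    (hf_supp : ∀ x ∉ intIoo xi xf, f x = 0)
    (hf_int : (∫ x, f x) = 1)
    (hf' : ∀ x ∈ intIoo xi xf, HasDerivAt f (f' x) x)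
    (hf'_neg : ∀ x ∈ intIoo xi xf, f' x < 0)
    (hy : ∀ x ∈ intIoo xi xf, HasDerivAt y (f x ^ (1 - α)) x)
    (hgdef : ∀ x ∈ intIoo xi xf, g (y x) = f x ^ α)
    (hg0 : ∀ z ∉ y '' intIoo xi xf, g z = 0) :
    ((∀ z, 0 ≤ g z) ∧ (∫ z, g z) = 1 ∧ StrictAntiOn g (y '' intIoo xi xf))
    ∧ ∃ g' : ℝ → ℝ,
        (∀ x ∈ intIoo xi xf, HasDerivAt g (g' (y x)) (y x))
        ∧ ∀ x ∈ intIoo xi xf,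
            g (y x) ^ γ / |g' (y x)|
              = (1 / α) * (f x ^ (2 + α * (γ - 2)) / |f' x|)
            ∧ g (y x) ^ (1 - γ) * |g' (y x)| * f x ^ (1 - α)
              = α * (f x ^ (1 - (2 + α * (γ - 2))) * |f' x|) := by
  set I := intIoo xi xf with hIdef
  have hIopen : IsOpen I := isOpen_intIoo xi xf
  have hIconv : Convex ℝ I := (ordConnected_intIoo xi xf).convex
  have hImeas : MeasurableSet I := hIopen.measurableSet
  have hfc : ContinuousOn f I := fun x hx => (hf' x hx).continuousAt.continuousWithinAt
  have hyc : ContinuousOn y I := fun x hx => (hy x hx).continuousAt.continuousWithinAt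
  -- f strictly decreasing on I
  have hfanti : StrictAntiOn f I := by
    apply strictAntiOn_of_deriv_neg hIconv hfc
    intro x hx
    rw [hIopen.interior_eq] at hx
    rw [(hf' x hx).deriv]
    exact hf'_neg x hx
  -- f positive on I
  have hf_pos : ∀ x ∈ I, 0 < f x := by
    intro x hx
    obtain ⟨ε, hε, hball⟩ := Metric.isOpen_iff.1 hIopen x hx
    have hx' : x + ε / 2 ∈ I := by
      apply hball
      simp only [Metric.mem_ball, Real.dist_eq, add_sub_cancel_left]
      rw [abs_of_nonneg (by linarith)]
      linarith
    have hlt := hfanti hx hx' (by linarith)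
    exact lt_of_le_of_lt (hf_nonneg _) hlt
  -- y strictly increasing on I
  have hymono : StrictMonoOn y I := by
    apply strictMonoOn_of_deriv_pos hIconv hyc
    intro x hx
    rw [hIopen.interior_eq] at hx
    rw [(hy x hx).deriv]
    exact Real.rpow_pos_of_pos (hf_pos x hx) _
  have hyinj : Set.InjOn y I := hymono.injOn
  -- nonnegativity of g
  have hg_nonneg : ∀ z, 0 ≤ g z := by
    intro z
    by_cases hz : z ∈ y '' I
    · obtain ⟨x, hx, rfl⟩ := hz
      rw [hgdef x hx]
      exact Real.rpow_nonneg (hf_nonneg x) α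
    · rw [hg0 z hz]
  -- integral of g
  have hg_int : (∫ z, g z) = 1 := by
    rw [← setIntegral_eq_integral_of_forall_compl_eq_zero hg0]
    rw [integral_image_eq_integral_abs_deriv_smul hImeas
      (fun x hx => (hy x hx).hasDerivWithinAt) hyinj g]
    have hcong : ∀ x ∈ I, |f x ^ (1 - α)| • g (y x) = f x := by
      intro x hx
      rw [hgdef x hx, smul_eq_mul,
        abs_of_nonneg (Real.rpow_nonneg (hf_nonneg x) _),
        ← Real.rpow_add (hf_pos x hx), sub_add_cancel, Real.rpow_one]
    rw [setIntegral_congr_fun hImeas hcong,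
      setIntegral_eq_integral_of_forall_compl_eq_zero hf_supp, hf_int]
  -- strict antitonicity of g
  have hganti : StrictAntiOn g (y '' I) := by
    rintro _ ⟨x1, hx1, rfl⟩ _ ⟨x2, hx2, rfl⟩ hlt
    have hx12 : x1 < x2 := (hymono.lt_iff_lt hx1 hx2).1 hlt
    rw [hgdef x1 hx1, hgdef x2 hx2]
    exact Real.rpow_lt_rpow (hf_nonneg x2) (hfanti hx1 hx2 hx12) hα
  -- the inverse of y on I
  set φ : ℝ → ℝ := Function.invFunOn y I with hφdef
  have hφy : ∀ x ∈ I, φ (y x) = x := fun x hx => hyinj.leftInvOn_invFunOn hx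
  set g' : ℝ → ℝ := fun z => α * f (φ z) ^ (2 * α - 2) * f' (φ z) with hg'def
  have hg'val : ∀ x ∈ I, g' (y x) = α * f x ^ (2 * α - 2) * f' x := by
    intro x hx
    simp only [hg'def, hφy x hx]
  -- derivative of g
  have hgderiv : ∀ x ∈ I, HasDerivAt g (g' (y x)) (y x) := by
    intro x0 hx0
    have P0 : 0 < f x0 := hf_pos x0 hx0
    obtain ⟨ε, hε, hball⟩ := Metric.isOpen_iff.1 hIopen x0 hx0
    set a := x0 - ε / 2 with hadef
    set b := x0 + ε / 2 with hbdef
    have hsub : Set.Icc a b ⊆ I := by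
      intro t ht
      apply hball
      simp only [Metric.mem_ball, Real.dist_eq]
      rw [abs_lt]
      constructor
      · simp only [hadef] at ht; linarith [ht.1]
      · simp only [hbdef] at ht; linarith [ht.2]
    have hax : a < x0 := by simp only [hadef]; linarith
    have hxb : x0 < b := by simp only [hbdef]; linarith
    have ha : a ∈ I := hsub ⟨le_refl a, by linarith⟩
    have hb : b ∈ I := hsub ⟨by linarith, le_refl b⟩
    have hIoosub : Set.Ioo a b ⊆ I := fun t ht => hsub (Set.Ioo_subset_Icc_self ht)
    set K := Set.Ioo (y a) (y b) with hKdef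
    have hKnhds : K ∈ 𝓝 (y x0) :=
      isOpen_Ioo.mem_nhds ⟨hymono ha hx0 hax, hymono hx0 hb hxb⟩
    have hsurj : K ⊆ y '' Set.Ioo a b :=
      intermediate_value_Ioo (le_of_lt (lt_trans hax hxb)) (hyc.mono hsub)
    have hKprop : ∀ z ∈ K, φ z ∈ Set.Ioo a b ∧ y (φ z) = z := by
      intro z hz
      obtain ⟨x, hx, rfl⟩ := hsurj hz
      rw [hφy x (hIoosub hx)]
      exact ⟨hx, rfl⟩
    have hleftinv : ∀ᶠ z in 𝓝 (y x0), y (φ z) = z :=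
      Filter.eventually_of_mem hKnhds (fun z hz => (hKprop z hz).2)
    have hφmono : StrictMonoOn φ K := by
      intro z1 hz1 z2 hz2 h12
      by_contra h
      have h21 : φ z2 ≤ φ z1 := not_lt.1 h
      have hle := hymono.monotoneOn (hIoosub (hKprop z2 hz2).1) (hIoosub (hKprop z1 hz1).1) h21
      rw [(hKprop z1 hz1).2, (hKprop z2 hz2).2] at hle
      exact absurd h12 (not_lt.2 hle)
    have hφx0 : φ (y x0) = x0 := hφy x0 hx0
    have hφcont : ContinuousAt φ (y x0) := by
      apply hφmono.continuousAt_of_image_mem_nhds hKnhds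
      rw [hφx0]
      apply Filter.mem_of_superset (isOpen_Ioo.mem_nhds ⟨hax, hxb⟩)
      intro x hx
      exact ⟨y x, ⟨hymono ha (hIoosub hx) hx.1, hymono (hIoosub hx) hb hx.2⟩,
        hφy x (hIoosub hx)⟩
    have hd0 : f x0 ^ (1 - α) ≠ 0 := ne_of_gt (Real.rpow_pos_of_pos P0 _)
    have hφderiv : HasDerivAt φ (f x0 ^ (1 - α))⁻¹ (y x0) := by
      apply HasDerivAt.of_local_left_inverse hφcont ?_ hd0 hleftinv
      rw [hφx0]
      exact hy x0 hx0
    have h1 : HasDerivAt f (f' x0) (φ (y x0)) := by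
      rw [hφx0]; exact hf' x0 hx0
    have hfφ : HasDerivAt (f ∘ φ) (f' x0 * (f x0 ^ (1 - α))⁻¹) (y x0) :=
      h1.comp (y x0) hφderiv
    have h2 : HasDerivAt (fun t : ℝ => t ^ α) (α * f x0 ^ (α - 1)) ((f ∘ φ) (y x0)) := by
      show HasDerivAt (fun t : ℝ => t ^ α) (α * f x0 ^ (α - 1)) (f (φ (y x0)))
      rw [hφx0]
      exact Real.hasDerivAt_rpow_const (Or.inl (ne_of_gt P0))
    have h3 : HasDerivAt ((fun t : ℝ => t ^ α) ∘ (f ∘ φ))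
        (α * f x0 ^ (α - 1) * (f' x0 * (f x0 ^ (1 - α))⁻¹)) (y x0) :=
      h2.comp (y x0) hfφ
    have heq : g =ᶠ[𝓝 (y x0)] ((fun t : ℝ => t ^ α) ∘ (f ∘ φ)) := by
      apply Filter.eventually_of_mem hKnhds
      intro z hz
      have hz1 := (hKprop z hz).1
      have hz2 := (hKprop z hz).2
      calc g z = g (y (φ z)) := by rw [hz2]
        _ = f (φ z) ^ α := hgdef _ (hIoosub hz1)
        _ = ((fun t : ℝ => t ^ α) ∘ (f ∘ φ)) z := rfl
    have hfinal := h3.congr_of_eventuallyEq heq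
    have hinv : (f x0 ^ (1 - α))⁻¹ = f x0 ^ (α - 1) := by
      rw [← Real.rpow_neg (le_of_lt P0), neg_sub]
    have hsplit : f x0 ^ (2 * α - 2) = f x0 ^ (α - 1) * f x0 ^ (α - 1) := by
      rw [← Real.rpow_add P0]
      congr 1
      ring
    have hEq : g' (y x0) = α * f x0 ^ (α - 1) * (f' x0 * (f x0 ^ (1 - α))⁻¹) := by
      rw [hg'val x0 hx0, hinv, hsplit]
      ring
    rw [hEq]
    exact hfinal
  refine ⟨⟨hg_nonneg, hg_int, hganti⟩, g', hgderiv, ?_⟩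
  intro x hx
  have P : 0 < f x := hf_pos x hx
  have hfx : (0:ℝ) ≤ f x := le_of_lt P
  have hf'ne : |f' x| ≠ 0 := abs_ne_zero.2 (ne_of_lt (hf'_neg x hx))
  have hαne : α ≠ 0 := ne_of_gt hα
  have hrne : f x ^ (2 * α - 2) ≠ 0 := ne_of_gt (Real.rpow_pos_of_pos P _)
  have habs : |g' (y x)| = α * f x ^ (2 * α - 2) * |f' x| := by
    rw [hg'val x hx, abs_mul, abs_mul, abs_of_pos hα,
      abs_of_pos (Real.rpow_pos_of_pos P _)]
  constructor
  · rw [hgdef x hx, ← Real.rpow_mul hfx, habs]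
    have key : f x ^ (α * γ) = f x ^ (2 + α * (γ - 2)) * f x ^ (2 * α - 2) := by
      rw [← Real.rpow_add P]
      congr 1
      ring
    rw [key]
    field_simp
  · rw [hgdef x hx, ← Real.rpow_mul hfx, habs]
    have key2 : f x ^ (α * (1 - γ)) * f x ^ (2 * α - 2) * f x ^ (1 - α)
        = f x ^ (1 - (2 + α * (γ - 2))) := by
      rw [← Real.rpow_add P, ← Real.rpow_add P]
      congr 1
      ring
    rw [← key2]
    ring
end
end

section
/- Closed form of the composed down-up transform: let α ≠ 2, β ≠ 2 and let f be a probability density function on (0, x_f) ⊆ (0, ∞), and suppose u(x) = ∫_x^{x_f} |(β−2)t|^{1/(β−2)} f(t) dt is finite; let g = 𝔘_β[f] be the one-parameter up transform determined by u and g(u(x)) = |(β−2)x|^{1/(2−β)}. Define S(x) = −((2−β)/(2−α)) |β−2|^{(β−α)/(2−β)} x^{(2−α)/(2−β)} and h(s) = |(2−α)s|^{(α−β)/(2−α)} f( |(2−α)s|^{(2−β)/(2−α)} / |2−β| ) for s in the range of S, extended by 0. Then: (i) S'(x) = −|(β−2)x|^{(β−α)/(2−β)} for all x ∈ (0, x_f);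 (ii) h(S(x)) · |S'(x)| = f(x) for all x ∈ (0, x_f), so that h is a probability density; and (iii) if f is differentiable, then h(S(x)) = g(u(x))^{α} / |g'(u(x))| for all x ∈ (0, x_f), i.e., h is the α-down transform of the β-up transform of f. -/
/-!
Put `y = |(β - 2) x|`; every quantity in sight is a power of `y` times a value of `f`.
Since `|(2 - α) S x| = y^{(2-α)/(2-β)}`, the formula defining `h` collapses to
`h (S x) = f x / y^{(β-α)/(2-β)}`, while `|S' x| = y^{(β-α)/(2-β)}`: this is (ii), and the
normalisation of `h` is the change of variables `s = S x`, `S` being injective.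
For the down transform, `u' = -y^{1/(β-2)} f` by the fundamental theorem of calculus, and
differentiating `g ∘ u = y^{1/(2-β)}` by the chain rule gives `|g' (u x)| f x = y^{β/(2-β)}`
(so in particular `f x ≠ 0`), whence `g (u x)^α / |g' (u x)| = f x / y^{(β-α)/(2-β)}` as well.
-/

open MeasureTheory Set Filter Topology

noncomputable section

lemma intIoo_eq_Ioc_union {a b : ℝ} {c : EReal} (hab : a ≤ b) (hbc : (b : EReal) < c) :
    intIoo a c = Ioc a b ∪ intIoo b c := by
  ext t
  simp only [intIoo, mem_union, mem_Ioc, EReal.coe_lt_coe_iff]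
  constructor
  · rintro ⟨hat, htc⟩
    exact (le_or_gt t b).imp (fun htb => ⟨hat, htb⟩) (fun hbt => ⟨hbt, htc⟩)
  · rintro (⟨hat, htb⟩ | ⟨hbt, htc⟩)
    · exact ⟨hat, (EReal.coe_le_coe_iff.mpr htb).trans_lt hbc⟩
    · exact ⟨hab.trans_lt hbt, htc⟩

lemma setIntegral_intIoo_eq_intervalIntegral_add {φ : ℝ → ℝ} {a b : ℝ} {c : EReal}
    (hab : a ≤ b) (hbc : (b : EReal) < c) (hφ : IntegrableOn φ (intIoo a c)) :
    ∫ t in intIoo a c, φ t = (∫ t in a..b, φ t) + ∫ t in intIoo b c, φ t := by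
  rw [intIoo_eq_Ioc_union hab hbc] at hφ ⊢
  rw [intervalIntegral.integral_of_le hab]
  refine setIntegral_union ?_ (isOpen_intIoo _ _).measurableSet
    (hφ.mono_set subset_union_left) (hφ.mono_set subset_union_right)
  exact disjoint_left.mpr fun t ht ht' => (EReal.coe_lt_coe_iff.mp ht'.1).not_ge ht.2

lemma hasDerivAt_of_eq_setIntegral_intIoo {φ u : ℝ → ℝ} {a c : EReal} {x : ℝ}
    (hx : x ∈ intIoo a c) (hφ : ∀ y ∈ intIoo a c, IntegrableOn φ (intIoo y c))
    (hu : ∀ y ∈ intIoo a c, u y = ∫ t in intIoo y c, φ t) (hφx : ContinuousAt φ x) :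
    HasDerivAt u (-φ x) x := by
  have hleft : ∀ᶠ y in 𝓝[<] x, y ∈ intIoo a c :=
    nhdsWithin_le_nhds ((isOpen_intIoo a c).mem_nhds hx)
  obtain ⟨y, hy, hyx⟩ := (hleft.and self_mem_nhdsWithin).exists
  have hnhds : intIoo y c ∈ 𝓝 x :=
    (isOpen_intIoo _ _).mem_nhds ⟨EReal.coe_lt_coe_iff.mpr hyx, hx.2⟩
  have hFTC : HasDerivAt (fun z => ∫ t in y..z, φ t) (φ x) x :=
    intervalIntegral.integral_hasDerivAt_right
      ((intervalIntegrable_iff_integrableOn_Ioc_of_le hyx.le).mpr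
        ((hφ y hy).mono_set (intIoo_eq_Ioc_union hyx.le hx.2 ▸ subset_union_left)))
      ⟨_, hnhds, (hφ y hy).aestronglyMeasurable⟩ hφx
  refine (hFTC.const_sub (u y)).congr_of_eventuallyEq ?_
  filter_upwards [hnhds] with z hz
  have hzI : z ∈ intIoo a c := ⟨hy.1.trans hz.1, hz.2⟩
  rw [hu y hy, hu z hzI, setIntegral_intIoo_eq_intervalIntegral_add
    (EReal.coe_lt_coe_iff.mp hz.1).le hz.2 (hφ y hy)]
  ring

-- The change of variables `S` and the density `h` of the statement.
def downUpVar (α β x : ℝ) : ℝ :=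
  -((2 - β) / (2 - α)) * |β - 2| ^ ((β - α) / (2 - β)) * x ^ ((2 - α) / (2 - β))

def downUpDensity (α β : ℝ) (f : ℝ → ℝ) (s : ℝ) : ℝ :=
  |(2 - α) * s| ^ ((α - β) / (2 - α)) * f (|(2 - α) * s| ^ ((2 - β) / (2 - α)) / |2 - β|)

section DownUpVar

variable {α β x : ℝ}

lemma hasDerivAt_downUpVar (hα : α ≠ 2) (hβ : β ≠ 2) (hx : 0 < x) :
    HasDerivAt (downUpVar α β) (-|(β - 2) * x| ^ ((β - α) / (2 - β))) x := by
  have h2α : 2 - α ≠ 0 := sub_ne_zero.mpr hα.symm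
  have h2β : 2 - β ≠ 0 := sub_ne_zero.mpr hβ.symm
  refine ((Real.hasDerivAt_rpow_const (p := (2 - α) / (2 - β)) (Or.inl hx.ne')).const_mul
    (-((2 - β) / (2 - α)) * |β - 2| ^ ((β - α) / (2 - β)))).congr_deriv ?_
  have hexp : (2 - α) / (2 - β) - 1 = (β - α) / (2 - β) := by field_simp; ring
  rw [hexp, abs_mul, abs_of_pos hx, Real.mul_rpow (abs_nonneg _) hx.le]
  field_simp

lemma abs_two_sub_mul_downUpVar (hα : α ≠ 2) (hβ : β ≠ 2) (hx : 0 < x) :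
    |(2 - α) * downUpVar α β x| = |(β - 2) * x| ^ ((2 - α) / (2 - β)) := by
  have h2α : 2 - α ≠ 0 := sub_ne_zero.mpr hα.symm
  have h2β : 2 - β ≠ 0 := sub_ne_zero.mpr hβ.symm
  have hb : 0 < |β - 2| := abs_pos.mpr (sub_ne_zero.mpr hβ)
  have hexp : (2 - α) / (2 - β) = 1 + (β - α) / (2 - β) := by field_simp; ring
  have hmul : (2 - α) * downUpVar α β x
      = -((2 - β) * (|β - 2| ^ ((β - α) / (2 - β)) * x ^ ((2 - α) / (2 - β)))) := by
    rw [downUpVar]; field_simp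
  rw [hmul, abs_neg, abs_mul,
    abs_of_pos (mul_pos (Real.rpow_pos_of_pos hb _) (Real.rpow_pos_of_pos hx _)),
    abs_sub_comm 2 β, abs_mul, abs_of_pos hx,
    Real.mul_rpow hb.le hx.le, hexp, Real.rpow_add hb, Real.rpow_one]
  ring

lemma downUpDensity_downUpVar (hα : α ≠ 2) (hβ : β ≠ 2) (hx : 0 < x) (f : ℝ → ℝ) :
    downUpDensity α β f (downUpVar α β x) = f x / |(β - 2) * x| ^ ((β - α) / (2 - β)) := by
  have h2α : 2 - α ≠ 0 := sub_ne_zero.mpr hα.symm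
  have h2β : 2 - β ≠ 0 := sub_ne_zero.mpr hβ.symm
  have hy : 0 < |(β - 2) * x| := abs_pos.mpr (mul_ne_zero (sub_ne_zero.mpr hβ) hx.ne')
  rw [downUpDensity, abs_two_sub_mul_downUpVar hα hβ hx, ← Real.rpow_mul hy.le,
    ← Real.rpow_mul hy.le]
  have e1 : (2 - α) / (2 - β) * ((2 - β) / (2 - α)) = 1 := by field_simp
  have e2 : (2 - α) / (2 - β) * ((α - β) / (2 - α)) = -((β - α) / (2 - β)) := by
    field_simp; ring
  rw [e1, e2, Real.rpow_one, Real.rpow_neg hy.le, abs_mul, abs_sub_comm 2 β,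
    mul_div_cancel_left₀ _ (abs_pos.mpr (sub_ne_zero.mpr hβ)).ne', abs_of_pos hx]
  ring

lemma injOn_downUpVar (hα : α ≠ 2) (hβ : β ≠ 2) : InjOn (downUpVar α β) (Ioi 0) := by
  have h2α : 2 - α ≠ 0 := sub_ne_zero.mpr hα.symm
  have h2β : 2 - β ≠ 0 := sub_ne_zero.mpr hβ.symm
  have hc : -((2 - β) / (2 - α)) * |β - 2| ^ ((β - α) / (2 - β)) ≠ 0 :=
    mul_ne_zero (neg_ne_zero.mpr (div_ne_zero h2β h2α))
      (Real.rpow_pos_of_pos (abs_pos.mpr (sub_ne_zero.mpr hβ)) _).ne'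
  intro x hx y hy hxy
  exact Real.rpow_left_injOn (div_ne_zero h2α h2β) (show 0 ≤ x from le_of_lt hx)
    (show 0 ≤ y from le_of_lt hy)
    (mul_left_cancel₀ hc hxy)

end DownUpVar

lemma hasDerivAt_abs_mul_rpow_s18 {c : ℝ} (hc : c ≠ 0) (r : ℝ) {x : ℝ} (hx : 0 < x) :
    HasDerivAt (fun y => |c * y| ^ r) (|c| * r * |c * x| ^ (r - 1)) x := by
  have hcx : |c| * x = |c * x| := by rw [abs_mul, abs_of_pos hx]
  have hderiv := ((hasDerivAt_id x).const_mul |c|).rpow_const (p := r)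
    (Or.inl (hcx ▸ abs_ne_zero.mpr (mul_ne_zero hc hx.ne')))
  simp only [id, mul_one, hcx] at hderiv
  refine hderiv.congr_of_eventuallyEq ?_
  filter_upwards [Ioi_mem_nhds hx] with y hy
  rw [abs_mul, abs_of_pos (mem_Ioi.mp hy)]

lemma integral_eq_of_comp_mul_abs_deriv {I : Set ℝ} (hI : MeasurableSet I)
    {S S' h f : ℝ → ℝ}
    (hS : ∀ x ∈ I, HasDerivWithinAt S (S' x) I x) (hSinj : InjOn S I)
    (hh : ∀ s ∉ S '' I, h s = 0) (hf : ∀ x ∉ I, f x = 0)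
    (hhf : ∀ x ∈ I, h (S x) * |S' x| = f x) : ∫ s, h s = ∫ x, f x := by
  rw [← setIntegral_eq_integral_of_forall_compl_eq_zero hh,
    integral_image_eq_integral_abs_deriv_smul hI hS hSinj h,
    ← setIntegral_eq_integral_of_forall_compl_eq_zero hf]
  refine setIntegral_congr_fun hI fun x hx => ?_
  rw [smul_eq_mul, mul_comm, hhf x hx]

lemma rpow_div_abs_deriv_of_comp_eq {α β : ℝ} (hβ : β ≠ 2) {f g u : ℝ → ℝ}
    {x g'ux : ℝ} (hx : 0 < x) (hfx : 0 ≤ f x)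
    (hu : HasDerivAt u (-(|(β - 2) * x| ^ ((1 : ℝ) / (β - 2)) * f x)) x)
    (hg : HasDerivAt g g'ux (u x))
    (hgu : (fun y => g (u y)) =ᶠ[𝓝 x] fun y => |(β - 2) * y| ^ ((1 : ℝ) / (2 - β))) :
    g (u x) ^ α / |g'ux| = f x / |(β - 2) * x| ^ ((β - α) / (2 - β)) := by
  have hβ2 : β - 2 ≠ 0 := sub_ne_zero.mpr hβ
  have h2β : 2 - β ≠ 0 := sub_ne_zero.mpr hβ.symm
  set r : ℝ := 1 / (2 - β) with hr
  set y : ℝ := |(β - 2) * x|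
  have hy : 0 < y := abs_pos.mpr (mul_ne_zero hβ2 hx.ne')
  have hchain : g'ux * -(y ^ (1 / (β - 2)) * f x) = |β - 2| * r * y ^ (r - 1) :=
    (hg.comp x hu).unique ((hasDerivAt_abs_mul_rpow_s18 hβ2 r hx).congr_of_eventuallyEq hgu)
  have hneg : (1 : ℝ) / (β - 2) = -r := by rw [hr]; field_simp; ring
  have hunit : |(|β - 2| * r)| = 1 := by
    rw [abs_mul, abs_abs, abs_div, abs_one, abs_sub_comm]
    field_simp
  have habs : |g'ux| * (y ^ (-r) * f x) = y ^ (r - 1) := by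
    simpa [abs_mul, hunit, abs_of_pos (Real.rpow_pos_of_pos hy _), abs_of_nonneg hfx, hneg]
      using congrArg abs hchain
  have hprod : |g'ux| * f x = y ^ (β / (2 - β)) := by
    have hexp : β / (2 - β) = r - 1 + r := by rw [hr]; field_simp; ring
    rw [hexp, Real.rpow_add hy, ← habs, Real.rpow_neg hy.le]
    field_simp [(Real.rpow_pos_of_pos hy r).ne']
  have hprod_pos : 0 < |g'ux| * f x := hprod ▸ Real.rpow_pos_of_pos hy _
  have hg'ux : |g'ux| ≠ 0 := left_ne_zero_of_mul hprod_pos.ne'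
  rw [hgu.eq_of_nhds, ← Real.rpow_mul hy.le,
    div_eq_div_iff hg'ux (Real.rpow_pos_of_pos hy _).ne', ← Real.rpow_add hy, mul_comm (f x),
    hprod]
  congr 1
  rw [hr]
  field_simp
  ring

theorem down_up_transform_closed_form_general
    (α β : ℝ) (hα : α ≠ 2) (hβ : β ≠ 2)
    (xf : EReal)
    (f g S h u : ℝ → ℝ)
    (hf_nonneg : ∀ x, 0 ≤ f x)
    (hf_supp : ∀ x ∉ intIoo 0 xf, f x = 0)
    (hf_int : (∫ x, f x) = 1)
    (hu_fin : ∀ x ∈ intIoo 0 xf,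
      IntegrableOn (fun t => |(β - 2) * t| ^ ((1 : ℝ) / (β - 2)) * f t)
        (intIoo (x : EReal) xf))
    (hu : ∀ x ∈ intIoo 0 xf,
      u x = ∫ t in intIoo (x : EReal) xf, |(β - 2) * t| ^ ((1 : ℝ) / (β - 2)) * f t)
    (hg : ∀ x ∈ intIoo 0 xf, g (u x) = |(β - 2) * x| ^ ((1 : ℝ) / (2 - β)))
    (hS : ∀ x, S x = -((2 - β) / (2 - α)) * |β - 2| ^ ((β - α) / (2 - β))
      * x ^ ((2 - α) / (2 - β)))
    (hh : ∀ s ∈ S '' intIoo 0 xf,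
      h s = |(2 - α) * s| ^ ((α - β) / (2 - α))
        * f (|(2 - α) * s| ^ ((2 - β) / (2 - α)) / |2 - β|))
    (hh0 : ∀ s ∉ S '' intIoo 0 xf, h s = 0) :
    (∀ x ∈ intIoo 0 xf, HasDerivAt S (-(|(β - 2) * x| ^ ((β - α) / (2 - β)))) x)
    ∧ (∀ x ∈ intIoo 0 xf, h (S x) * |(β - 2) * x| ^ ((β - α) / (2 - β)) = f x)
    ∧ ((∀ s, 0 ≤ h s) ∧ (∫ s, h s) = 1)
    ∧ (∀ f' : ℝ → ℝ, (∀ x ∈ intIoo 0 xf, HasDerivAt f (f' x) x) →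
        ∀ g' : ℝ → ℝ, (∀ x ∈ intIoo 0 xf, HasDerivAt g (g' (u x)) (u x)) →
        ∀ x ∈ intIoo 0 xf, h (S x) = g (u x) ^ α / |g' (u x)|) := by
  obtain rfl : S = downUpVar α β := funext hS
  have hpos : ∀ x ∈ intIoo 0 xf, 0 < x := fun x hx => EReal.coe_pos.mp hx.1
  have hy : ∀ x ∈ intIoo 0 xf, 0 < |(β - 2) * x| := fun x hx =>
    abs_pos.mpr (mul_ne_zero (sub_ne_zero.mpr hβ) (hpos x hx).ne')
  have hderiv := fun x hx => hasDerivAt_downUpVar hα hβ (hpos x hx)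
  have hhS : ∀ x ∈ intIoo 0 xf,
      h (downUpVar α β x) = f x / |(β - 2) * x| ^ ((β - α) / (2 - β)) := fun x hx =>
    (hh _ (mem_image_of_mem _ hx)).trans (downUpDensity_downUpVar hα hβ (hpos x hx) f)
  have hdensity : ∀ x ∈ intIoo 0 xf,
      h (downUpVar α β x) * |(β - 2) * x| ^ ((β - α) / (2 - β)) = f x := fun x hx => by
    rw [hhS x hx, div_mul_cancel₀ _ (Real.rpow_pos_of_pos (hy x hx) _).ne']
  refine ⟨hderiv, hdensity, ⟨fun s => ?_, ?_⟩, fun f' hf' g' hg' x hx => ?_⟩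
  · by_cases hs : s ∈ downUpVar α β '' intIoo 0 xf
    · rw [hh s hs]; exact mul_nonneg (Real.rpow_nonneg (abs_nonneg _) _) (hf_nonneg _)
    · rw [hh0 s hs]
  · rw [← hf_int]
    refine integral_eq_of_comp_mul_abs_deriv (isOpen_intIoo 0 xf).measurableSet
      (fun x hx => (hderiv x hx).hasDerivWithinAt) ((injOn_downUpVar hα hβ).mono hpos)
      hh0 hf_supp fun x hx => ?_
    rw [abs_neg, abs_of_nonneg (Real.rpow_nonneg (abs_nonneg _) _), hdensity x hx]
  · have hφ : ContinuousAt (fun t => |(β - 2) * t| ^ ((1 : ℝ) / (β - 2)) * f t) x :=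
      ((continuous_const.mul continuous_id).abs.continuousAt.rpow_const
        (Or.inl (hy x hx).ne')).mul (hf' x hx).continuousAt
    rw [hhS x hx]
    exact (rpow_div_abs_deriv_of_comp_eq hβ (hpos x hx) (hf_nonneg x)
      (hasDerivAt_of_eq_setIntegral_intIoo hx hu_fin hu hφ) (hg' x hx)
      (eventually_of_mem ((isOpen_intIoo 0 xf).mem_nhds hx) hg)).symm

/-- closed form of the composed down-up transform
`𝔇_α𝔘_β[f] = 𝔊_{2-α,2-β}[f]`. -/
theorem down_up_transform_closed_form
    (α β : ℝ) (hα : α ≠ 2) (hβ : β ≠ 2)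
    (xf : EReal) (hxf : (0 : EReal) < xf)
    (f g S h u : ℝ → ℝ)
    (hf_meas : Measurable f)
    (hf_nonneg : ∀ x, 0 ≤ f x)
    (hf_supp : ∀ x ∉ intIoo 0 xf, f x = 0)
    (hf_int : (∫ x, f x) = 1)
    (hu_fin : ∀ x ∈ intIoo 0 xf,
      IntegrableOn (fun t => |(β - 2) * t| ^ ((1 : ℝ) / (β - 2)) * f t)
        (intIoo (x : EReal) xf))
    (hu : ∀ x ∈ intIoo 0 xf,
      u x = ∫ t in intIoo (x : EReal) xf, |(β - 2) * t| ^ ((1 : ℝ) / (β - 2)) * f t)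
    (hg : ∀ x ∈ intIoo 0 xf, g (u x) = |(β - 2) * x| ^ ((1 : ℝ) / (2 - β)))
    (hS : ∀ x, S x = -((2 - β) / (2 - α)) * |β - 2| ^ ((β - α) / (2 - β))
      * x ^ ((2 - α) / (2 - β)))
    (hh : ∀ s ∈ S '' intIoo 0 xf,
      h s = |(2 - α) * s| ^ ((α - β) / (2 - α))
        * f (|(2 - α) * s| ^ ((2 - β) / (2 - α)) / |2 - β|))
    (hh0 : ∀ s ∉ S '' intIoo 0 xf, h s = 0) :
    (∀ x ∈ intIoo 0 xf, HasDerivAt S (-(|(β - 2) * x| ^ ((β - α) / (2 - β)))) x)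
    ∧ (∀ x ∈ intIoo 0 xf, h (S x) * |(β - 2) * x| ^ ((β - α) / (2 - β)) = f x)
    ∧ ((∀ s, 0 ≤ h s) ∧ (∫ s, h s) = 1)
    ∧ (∀ f' : ℝ → ℝ, (∀ x ∈ intIoo 0 xf, HasDerivAt f (f' x) x) →
        ∀ g' : ℝ → ℝ, (∀ x ∈ intIoo 0 xf, HasDerivAt g (g' (u x)) (u x)) →
        ∀ x ∈ intIoo 0 xf, h (S x) = g (u x) ^ α / |g' (u x)|) :=
  down_up_transform_closed_form_general α β hα hβ xf f g S h u hf_nonneg hf_supp hf_int hu_fin hu hg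
    hS hh hh0
end
end
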